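/- arXiv:1506.04272 — 6 statements merged into one kernel-verified Lean document; each statement's English description precedes it below -/
import Mathlib

section
/- The matrix I + αÃ is invertible, and the limit v = lim_{k→∞} v^(k) of the counting-model sequence is the unique vector satisfying the fixed-point equation v = e − α Ã v (equivalently, v = (I + αÃ)^{−1} e). -/
open Matrix Filter Topology

/-!
Every row sum of `|Ã|` is a row sum of `|A|` divided by their maximum `N`, so `Ã` has
`∞`-operator norm at most `1` and `‖αÃ‖ < 1`; the Neumann series then inverts `I + αÃ`.
The partial sums obey `v^(k+1) = e - αÃ v^(k)`, so the limit is a fixed point of the continuous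
map `w ↦ e - αÃ w`. That equation reads `(I + αÃ) w = e`, whose solution is unique.
-/

attribute [local instance] Matrix.linftyOpSeminormedAddCommGroup Matrix.linftyOpNormedRing
  Matrix.linftyOpNormedSpace

theorem norm_inv_smul_le_one {E : Type*} [SeminormedAddCommGroup E] [NormedSpace ℝ E]
    {x : E} {N : ℝ} (h : ‖x‖ ≤ N) : ‖N⁻¹ • x‖ ≤ 1 := by
  rw [norm_smul, norm_inv, Real.norm_of_nonneg ((norm_nonneg x).trans h)]
  exact inv_mul_le_one_of_le₀ h ((norm_nonneg x).trans h)

theorem isUnit_one_add_of_norm_lt_one {R : Type*} [NormedRing R] [HasSummableGeomSeries R]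
    {x : R} (h : ‖x‖ < 1) : IsUnit (1 + x) := by
  simpa using isUnit_one_sub_of_norm_lt_one (x := -x) (by rwa [norm_neg])

theorem Function.isFixedPt_of_tendsto_of_succ_eq {α : Type*} [TopologicalSpace α] [T2Space α]
    {f : α → α} {x : ℕ → α} {y : α} (hx : ∀ k, x (k + 1) = f (x k))
    (hy : Tendsto x atTop (𝓝 y)) (hf : ContinuousAt f y) : IsFixedPt f y :=
  tendsto_nhds_unique ((hf.tendsto.comp hy).congr fun k => (hx k).symm)
    (hy.comp (tendsto_add_atTop_nat 1))

namespace Matrix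

variable {m n R : Type*} [Fintype m] [Fintype n]

theorem linfty_opNorm_le_of_forall_row_sum_le {α : Type*} [SeminormedAddCommGroup α]
    {A : Matrix m n α} {N : ℝ} (hN : 0 ≤ N) (h : ∀ i, ∑ j, ‖A i j‖ ≤ N) : ‖A‖ ≤ N := by
  rw [linfty_opNorm_def, ← NNReal.coe_mk N hN, NNReal.coe_le_coe]
  refine Finset.sup_le fun i _ => ?_
  rw [← NNReal.coe_le_coe]
  simpa using h i

variable [DecidableEq n] [CommRing R]

theorem sum_range_succ_succ_pow_smul_mulVec (B : Matrix n n R) (c : R) (e : n → R) (k : ℕ) :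
    ∑ ℓ ∈ Finset.range (k + 2), c ^ ℓ • (B ^ ℓ *ᵥ e)
      = e + c • (B *ᵥ ∑ ℓ ∈ Finset.range (k + 1), c ^ ℓ • (B ^ ℓ *ᵥ e)) := by
  rw [Finset.sum_range_succ', pow_zero, pow_zero, one_mulVec, one_smul, add_comm,
    mulVec_sum, Finset.smul_sum]
  congr 1
  refine Finset.sum_congr rfl fun ℓ _ => ?_
  rw [pow_succ', pow_succ', ← mulVec_mulVec, mulVec_smul, smul_smul]

theorem eq_sub_smul_mulVec_iff (B : Matrix n n R) (c : R) (e w : n → R) :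
    w = e - c • (B *ᵥ w) ↔ (1 + c • B) *ᵥ w = e := by
  rw [add_mulVec, one_mulVec, smul_mulVec, eq_sub_iff_add_eq]

end Matrix

theorem counting_semantics_fixed_point_general
    (n : ℕ)
    (A : Matrix (Fin n) (Fin n) ℝ)
    (N : ℝ) (hN : IsGreatest (Set.range fun i : Fin n => ∑ j, |A i j|) N)
    (At : Matrix (Fin n) (Fin n) ℝ) (hAt : At = N⁻¹ • A)
    (e : Fin n → ℝ)
    (α : ℝ) (hα : α ∈ Set.Ioo (0 : ℝ) 1)
    (vs : ℕ → Fin n → ℝ)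
    (hvs : ∀ k, vs k = ∑ ℓ ∈ Finset.range (k + 1), ((-1 : ℝ) ^ ℓ * α ^ ℓ) • ((At ^ ℓ) *ᵥ e))
    (v : Fin n → ℝ) (hv : Tendsto vs atTop (𝓝 v)) :
    IsUnit (1 + α • At) ∧ v = e - α • (At *ᵥ v) ∧
      ∀ w : Fin n → ℝ, w = e - α • (At *ᵥ w) → w = v := by
  obtain ⟨⟨i, hNi⟩, hN_ub⟩ := hN
  have hAt_norm : ‖At‖ ≤ 1 := by
    refine hAt ▸ norm_inv_smul_le_one (linfty_opNorm_le_of_forall_row_sum_le ?_ fun i => ?_)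
    · exact hNi ▸ Finset.sum_nonneg fun j _ => abs_nonneg _
    · exact hN_ub ⟨i, rfl⟩
  have hunit : IsUnit (1 + α • At) := by
    refine isUnit_one_add_of_norm_lt_one ?_
    rw [norm_smul, Real.norm_of_nonneg hα.1.le]
    exact (mul_le_of_le_one_right hα.1.le hAt_norm).trans_lt hα.2
  have hrec : ∀ k, vs (k + 1) = e - α • (At *ᵥ vs k) := fun k => by
    simp only [hvs, ← neg_pow, sum_range_succ_succ_pow_smul_mulVec, neg_smul, ← sub_eq_add_neg]
  have hfix : v = e - α • (At *ᵥ v) :=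
    (Function.isFixedPt_of_tendsto_of_succ_eq (f := fun w => e - α • (At *ᵥ w)) hrec hv
      (by fun_prop)).symm
  refine ⟨hunit, hfix, fun w hw => ?_⟩
  rw [eq_sub_smul_mulVec_iff] at hw hfix
  exact mulVec_injective_iff_isUnit.2 hunit (hw.trans hfix.symm)

/-- I + αÃ is invertible and the limit v of the counting-model sequence
is the unique solution of v = e − α Ã v. -/
theorem counting_semantics_fixed_point
    (n : ℕ) (R : Fin n → Fin n → Prop) [DecidableRel R]
    (hR : ∃ i j, R i j)
    (A : Matrix (Fin n) (Fin n) ℝ)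
    (hA : ∀ i j, A i j = if R j i then 1 else 0)
    (N : ℝ) (hN : IsGreatest (Set.range fun i : Fin n => ∑ j, |A i j|) N)
    (At : Matrix (Fin n) (Fin n) ℝ) (hAt : At = N⁻¹ • A)
    (e : Fin n → ℝ) (he : e = fun _ => 1)
    (α : ℝ) (hα : α ∈ Set.Ioo (0 : ℝ) 1)
    (vs : ℕ → Fin n → ℝ)
    (hvs : ∀ k, vs k = ∑ ℓ ∈ Finset.range (k + 1), ((-1 : ℝ) ^ ℓ * α ^ ℓ) • ((At ^ ℓ) *ᵥ e))
    (v : Fin n → ℝ) (hv : Tendsto vs atTop (𝓝 v)) :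
    IsUnit (1 + α • At) ∧ v = e - α • (At *ᵥ v) ∧
      ∀ w : Fin n → ℝ, w = e - α • (At *ᵥ w) → w = v :=
  counting_semantics_fixed_point_general n A N hN At hAt e α hα vs hvs v hv
end

section
/- (Abstraction) If τ : X_1 → X_2 is an isomorphism between two argumentation frameworks AF_1 = (X_1, R_1) and AF_2 = (X_2, R_2) (a bijection such that for all x, y ∈ X_1, x R_1 y if and only if τ(x) R_2 τ(y)), then for every damping factor α ∈ (0,1) and every argument x ∈ X_1, the counting semantics agree: v^{AF_1}_α(x) = v^{AF_2}_α(τ(x)). -/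
open Matrix

/-- Abstraction: isomorphic argumentation frameworks have the same
counting semantics (modulo the isomorphism τ). -/
theorem counting_semantics_abstraction
    (X₁ X₂ : Type) [Fintype X₁] [Fintype X₂] [DecidableEq X₁] [DecidableEq X₂]
    (R₁ : X₁ → X₁ → Prop) (R₂ : X₂ → X₂ → Prop) [DecidableRel R₁] [DecidableRel R₂]
    (hR₁ : ∃ x y, R₁ x y)
    (τ : X₁ ≃ X₂) (hτ : ∀ x y, R₁ x y ↔ R₂ (τ x) (τ y))
    (A₁ : Matrix X₁ X₁ ℝ) (hA₁ : ∀ i j, A₁ i j = if R₁ j i then 1 else 0)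
    (A₂ : Matrix X₂ X₂ ℝ) (hA₂ : ∀ i j, A₂ i j = if R₂ j i then 1 else 0)
    (N₁ : ℝ) (hN₁ : IsGreatest (Set.range fun i : X₁ => ∑ j, |A₁ i j|) N₁)
    (N₂ : ℝ) (hN₂ : IsGreatest (Set.range fun i : X₂ => ∑ j, |A₂ i j|) N₂)
    (At₁ : Matrix X₁ X₁ ℝ) (hAt₁ : At₁ = N₁⁻¹ • A₁)
    (At₂ : Matrix X₂ X₂ ℝ) (hAt₂ : At₂ = N₂⁻¹ • A₂)
    (e₁ : X₁ → ℝ) (he₁ : e₁ = fun _ => 1)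
    (e₂ : X₂ → ℝ) (he₂ : e₂ = fun _ => 1)
    (α : ℝ) (hα : α ∈ Set.Ioo (0 : ℝ) 1)
    (vs₁ : ℕ → X₁ → ℝ)
    (hvs₁ : ∀ k, vs₁ k = ∑ ℓ ∈ Finset.range (k + 1), ((-1 : ℝ) ^ ℓ * α ^ ℓ) • ((At₁ ^ ℓ) *ᵥ e₁))
    (vs₂ : ℕ → X₂ → ℝ)
    (hvs₂ : ∀ k, vs₂ k = ∑ ℓ ∈ Finset.range (k + 1), ((-1 : ℝ) ^ ℓ * α ^ ℓ) • ((At₂ ^ ℓ) *ᵥ e₂))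
    (v₁ : X₁ → ℝ) (hv₁ : Filter.Tendsto vs₁ Filter.atTop (nhds v₁))
    (v₂ : X₂ → ℝ) (hv₂ : Filter.Tendsto vs₂ Filter.atTop (nhds v₂)) :
    ∀ x : X₁, v₁ x = v₂ (τ x) := by
  -- A₁ is the reindexing of A₂ by τ
  have hA : A₁ = A₂.submatrix τ τ := by
    ext i j
    simp [hA₁, hA₂, Matrix.submatrix_apply, hτ]
  -- The ranges of row sums coincide, so N₁ = N₂
  have hrange : (Set.range fun i : X₁ => ∑ j, |A₁ i j|) =
      (Set.range fun i : X₂ => ∑ j, |A₂ i j|) := by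
    ext c
    constructor
    · rintro ⟨i, rfl⟩
      refine ⟨τ i, ?_⟩
      simp only [hA, Matrix.submatrix_apply]
      exact (Equiv.sum_comp τ fun j => |A₂ (τ i) j|).symm
    · rintro ⟨i, rfl⟩
      refine ⟨τ.symm i, ?_⟩
      simp only [hA, Matrix.submatrix_apply, Equiv.apply_symm_apply]
      exact Equiv.sum_comp τ fun j => |A₂ i j|
  have hN : N₁ = N₂ := by
    have h1 : IsGreatest (Set.range fun i : X₂ => ∑ j, |A₂ i j|) N₁ := hrange ▸ hN₁
    exact le_antisymm (hN₂.2 h1.1) (h1.2 hN₂.1)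
  -- At₁ is reindexing of At₂
  have hAt : At₁ = (Matrix.reindexAlgEquiv ℝ ℝ τ.symm) At₂ := by
    rw [hAt₁, hAt₂, hN, hA]
    ext i j
    simp [Matrix.reindexAlgEquiv_apply, Matrix.reindex_apply, Matrix.submatrix_apply]
  -- pointwise equality of partial sums
  have key : ∀ k x, vs₁ k x = vs₂ k (τ x) := by
    intro k x
    rw [hvs₁, hvs₂]
    simp only [Finset.sum_apply, Pi.smul_apply, smul_eq_mul]
    refine Finset.sum_congr rfl fun ℓ _ => ?_
    congr 1
    have hpow : At₁ ^ ℓ = (Matrix.reindexAlgEquiv ℝ ℝ τ.symm) (At₂ ^ ℓ) := by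
      rw [hAt, ← map_pow]
    rw [hpow]
    have : (Matrix.reindexAlgEquiv ℝ ℝ τ.symm) (At₂ ^ ℓ) = (At₂ ^ ℓ).submatrix τ τ := by
      ext i j
      simp [Matrix.reindexAlgEquiv_apply, Matrix.reindex_apply, Matrix.submatrix_apply]
    rw [this]
    simp only [Matrix.mulVec, Matrix.submatrix_apply, dotProduct, he₁, he₂]
    exact Equiv.sum_comp τ fun j => (At₂ ^ ℓ) (τ x) j * 1
  intro x
  have h1 : Filter.Tendsto (fun k => vs₁ k x) Filter.atTop (nhds (v₁ x)) :=
    (continuous_apply x).continuousAt.tendsto.comp hv₁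
  have h2 : Filter.Tendsto (fun k => vs₂ k (τ x)) Filter.atTop (nhds (v₂ (τ x))) :=
    (continuous_apply (τ x)).continuousAt.tendsto.comp hv₂
  have h1' : Filter.Tendsto (fun k => vs₂ k (τ x)) Filter.atTop (nhds (v₁ x)) := by
    simpa [key] using h1
  exact tendsto_nhds_unique h1' h2
end

section
/- If the argument graph of an argumentation framework (X,R) with |X| = n ≥ 1 is an elementary cycle through all its arguments (i.e., up to relabelling, R = {(x_1,x_2), (x_2,x_3), …, (x_{n−1},x_n), (x_n,x_1)}), then all arguments receive the same counting-semantics value: v_α(x) = v_α(y) for all x, y ∈ X and every damping factor α ∈ (0,1). -/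
open Matrix Filter Topology

/-- if the argument graph is an elementary cycle through all n ≥ 1
arguments (x_i attacks x_{i+1 mod n}), then all arguments receive the same
counting-semantics value, for every damping factor α ∈ (0,1). -/
theorem counting_semantics_elementary_cycle
    (n : ℕ) (hn : 0 < n)
    (R : Fin n → Fin n → Prop) [DecidableRel R]
    (hR : ∀ i j : Fin n, R i j ↔ (j : ℕ) = ((i : ℕ) + 1) % n)
    (A : Matrix (Fin n) (Fin n) ℝ)
    (hA : ∀ i j, A i j = if R j i then 1 else 0)
    (N : ℝ) (hN : IsGreatest (Set.range fun i : Fin n => ∑ j, |A i j|) N)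
    (At : Matrix (Fin n) (Fin n) ℝ) (hAt : At = N⁻¹ • A)
    (e : Fin n → ℝ) (he : e = fun _ => 1)
    (α : ℝ) (hα : α ∈ Set.Ioo (0 : ℝ) 1)
    (vs : ℕ → Fin n → ℝ)
    (hvs : ∀ k, vs k = ∑ ℓ ∈ Finset.range (k + 1), ((-1 : ℝ) ^ ℓ * α ^ ℓ) • ((At ^ ℓ) *ᵥ e))
    (v : Fin n → ℝ) (hv : Tendsto vs atTop (𝓝 v)) :
    ∀ x y : Fin n, v x = v y := by
  -- every row of A sums to 1
  have hrow : ∀ i : Fin n, ∑ j, A i j = 1 := by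
    intro i
    have key : ∀ j : Fin n, R j i ↔ j = ⟨((i : ℕ) + (n - 1)) % n, Nat.mod_lt _ hn⟩ := by
      intro j
      rw [hR]
      constructor
      · intro h
        apply Fin.ext
        simp only [h, Nat.mod_add_mod]
        have h1 : (j : ℕ) + 1 + (n - 1) = (j : ℕ) + n := by omega
        rw [h1, Nat.add_mod_right, Nat.mod_eq_of_lt j.isLt]
      · intro h
        subst h
        simp only [Nat.mod_add_mod]
        have h1 : (i : ℕ) + (n - 1) + 1 = (i : ℕ) + n := by omega
        rw [h1, Nat.add_mod_right, Nat.mod_eq_of_lt i.isLt]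
    calc ∑ j, A i j
        = ∑ j, if j = (⟨((i : ℕ) + (n - 1)) % n, Nat.mod_lt _ hn⟩ : Fin n) then (1:ℝ) else 0 := by
          refine Finset.sum_congr rfl fun j _ => ?_
          rw [hA]
          simp [key j]
      _ = 1 := by simp
  -- hence A *ᵥ e = e
  have hAe : A *ᵥ e = e := by
    funext i
    simp [mulVec, dotProduct, he, hrow i]
  have hAte : At *ᵥ e = N⁻¹ • e := by
    rw [hAt, smul_mulVec, hAe]
  have hpow : ∀ ℓ : ℕ, (At ^ ℓ) *ᵥ e = ((N⁻¹) ^ ℓ) • e := by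
    intro ℓ
    induction ℓ with
    | zero => simp
    | succ m ih =>
      rw [pow_succ, ← mulVec_mulVec, hAte, mulVec_smul, ih, smul_smul, pow_succ]
      ring_nf
  -- each partial sum is a constant vector
  have hconst : ∀ k, ∀ x y : Fin n, vs k x = vs k y := by
    intro k x y
    rw [hvs k]
    simp only [Finset.sum_apply, Pi.smul_apply]
    refine Finset.sum_congr rfl fun ℓ _ => ?_
    rw [hpow, he]
    simp
  intro x y
  have hx : Tendsto (fun k => vs k x) atTop (𝓝 (v x)) := (tendsto_pi_nhds.mp hv) x
  have hy : Tendsto (fun k => vs k y) atTop (𝓝 (v y)) := (tendsto_pi_nhds.mp hv) y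
  have : (fun k => vs k x) = fun k => vs k y := funext fun k => hconst k x y
  rw [this] at hx
  exact tendsto_nhds_unique hx hy
end

section
/- If τ : X_1 → X_2 is an isomorphism between argumentation frameworks AF_1 = (X_1, R_1) and AF_2 = (X_2, R_2), then for every damping factor α ∈ (0,1) the induced rankings agree: for all x, y ∈ X_1, v^{AF_1}_α(x) ≥ v^{AF_1}_α(y) if and only if v^{AF_2}_α(τ(x)) ≥ v^{AF_2}_α(τ(y)). -/
open Matrix

/-- an isomorphism of argumentation frameworks preserves the ranking
induced by the counting semantics. -/
theorem counting_semantics_ranking_isomorphism_invariant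
    (X₁ X₂ : Type) [Fintype X₁] [Fintype X₂] [DecidableEq X₁] [DecidableEq X₂]
    (R₁ : X₁ → X₁ → Prop) (R₂ : X₂ → X₂ → Prop) [DecidableRel R₁] [DecidableRel R₂]
    (hR₁ : ∃ x y, R₁ x y)
    (τ : X₁ ≃ X₂) (hτ : ∀ x y, R₁ x y ↔ R₂ (τ x) (τ y))
    (A₁ : Matrix X₁ X₁ ℝ) (hA₁ : ∀ i j, A₁ i j = if R₁ j i then 1 else 0)
    (A₂ : Matrix X₂ X₂ ℝ) (hA₂ : ∀ i j, A₂ i j = if R₂ j i then 1 else 0)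
    (N₁ : ℝ) (hN₁ : IsGreatest (Set.range fun i : X₁ => ∑ j, |A₁ i j|) N₁)
    (N₂ : ℝ) (hN₂ : IsGreatest (Set.range fun i : X₂ => ∑ j, |A₂ i j|) N₂)
    (At₁ : Matrix X₁ X₁ ℝ) (hAt₁ : At₁ = N₁⁻¹ • A₁)
    (At₂ : Matrix X₂ X₂ ℝ) (hAt₂ : At₂ = N₂⁻¹ • A₂)
    (e₁ : X₁ → ℝ) (he₁ : e₁ = fun _ => 1)
    (e₂ : X₂ → ℝ) (he₂ : e₂ = fun _ => 1)
    (α : ℝ) (hα : α ∈ Set.Ioo (0 : ℝ) 1)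
    (vs₁ : ℕ → X₁ → ℝ)
    (hvs₁ : ∀ k, vs₁ k = ∑ ℓ ∈ Finset.range (k + 1), ((-1 : ℝ) ^ ℓ * α ^ ℓ) • ((At₁ ^ ℓ) *ᵥ e₁))
    (vs₂ : ℕ → X₂ → ℝ)
    (hvs₂ : ∀ k, vs₂ k = ∑ ℓ ∈ Finset.range (k + 1), ((-1 : ℝ) ^ ℓ * α ^ ℓ) • ((At₂ ^ ℓ) *ᵥ e₂))
    (v₁ : X₁ → ℝ) (hv₁ : Filter.Tendsto vs₁ Filter.atTop (nhds v₁))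
    (v₂ : X₂ → ℝ) (hv₂ : Filter.Tendsto vs₂ Filter.atTop (nhds v₂)) :
    ∀ x y : X₁, v₁ y ≤ v₁ x ↔ v₂ (τ y) ≤ v₂ (τ x) := by
  -- A₂ corresponds to A₁ under τ
  have hA : ∀ i j, A₂ (τ i) (τ j) = A₁ i j := by
    intro i j
    rw [hA₁, hA₂]
    by_cases h : R₁ j i
    · rw [if_pos ((hτ j i).mp h), if_pos h]
    · rw [if_neg (fun hh => h ((hτ j i).mpr hh)), if_neg h]
  -- row sums agree, hence N₁ = N₂
  have hrows : (Set.range fun i : X₁ => ∑ j, |A₁ i j|)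
      = (Set.range fun i : X₂ => ∑ j, |A₂ i j|) := by
    ext s
    constructor
    · rintro ⟨i, rfl⟩
      refine ⟨τ i, ?_⟩
      show ∑ j, |A₂ (τ i) j| = ∑ j, |A₁ i j|
      rw [← Equiv.sum_comp τ (fun j => |A₂ (τ i) j|)]
      simp [hA]
    · rintro ⟨i, rfl⟩
      refine ⟨τ.symm i, ?_⟩
      show ∑ j, |A₁ (τ.symm i) j| = ∑ j, |A₂ i j|
      rw [← Equiv.sum_comp τ (fun j => |A₂ i j|)]
      refine Finset.sum_congr rfl fun j _ => ?_
      conv_rhs => rw [← τ.apply_symm_apply i]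
      rw [hA]
  have hN : N₁ = N₂ := by
    rw [hrows] at hN₁
    exact IsGreatest.unique hN₁ hN₂
  have hAt : ∀ i j, At₂ (τ i) (τ j) = At₁ i j := by
    intro i j
    rw [hAt₁, hAt₂, hN]
    simp [hA]
  -- powers applied to e agree
  have hpow : ∀ ℓ : ℕ, ∀ x : X₁, ((At₂ ^ ℓ) *ᵥ e₂) (τ x) = ((At₁ ^ ℓ) *ᵥ e₁) x := by
    intro ℓ
    induction ℓ with
    | zero => intro x; simp [he₁, he₂]
    | succ n ih =>
        intro x
        rw [pow_succ', pow_succ', ← Matrix.mulVec_mulVec, ← Matrix.mulVec_mulVec]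
        show ∑ j, At₂ (τ x) j * ((At₂ ^ n) *ᵥ e₂) j
            = ∑ j, At₁ x j * ((At₁ ^ n) *ᵥ e₁) j
        rw [← Equiv.sum_comp τ (fun j => At₂ (τ x) j * ((At₂ ^ n) *ᵥ e₂) j)]
        exact Finset.sum_congr rfl fun j _ => by rw [hAt, ih]
  -- partial sums agree
  have hvs : ∀ k : ℕ, ∀ x : X₁, vs₂ k (τ x) = vs₁ k x := by
    intro k x
    rw [hvs₁, hvs₂]
    simp only [Finset.sum_apply, Pi.smul_apply, smul_eq_mul]
    exact Finset.sum_congr rfl fun ℓ _ => by rw [hpow]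
  -- limits agree
  have hv : ∀ x : X₁, v₂ (τ x) = v₁ x := by
    intro x
    have h1 : Filter.Tendsto (fun k => vs₁ k x) Filter.atTop (nhds (v₁ x)) :=
      (continuous_apply x).continuousAt.tendsto.comp hv₁
    have h2 : Filter.Tendsto (fun k => vs₂ k (τ x)) Filter.atTop (nhds (v₂ (τ x))) :=
      (continuous_apply (τ x)).continuousAt.tendsto.comp hv₂
    have h2' : Filter.Tendsto (fun k => vs₁ k x) Filter.atTop (nhds (v₂ (τ x))) := by
      simpa only [hvs] using h2
    exact tendsto_nhds_unique h2' h1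
  intro x y
  rw [hv x, hv y]
end

section
/- (Property P2) For any damping factor α ∈ (0,1) and arguments x_i, x_j ∈ X: if x_i and x_j have exactly the same set of attackers (R^-(x_i) = R^-(x_j)), then v_α(x_i) = v_α(x_j). -/
open Matrix Filter Topology

/-- Property P2: arguments with the same set of attackers have the
same counting-semantics value. -/
theorem counting_semantics_P2
    (n : ℕ) (R : Fin n → Fin n → Prop) [DecidableRel R]
    (hR : ∃ i j, R i j)
    (A : Matrix (Fin n) (Fin n) ℝ)
    (hA : ∀ i j, A i j = if R j i then 1 else 0)
    (N : ℝ) (hN : IsGreatest (Set.range fun i : Fin n => ∑ j, |A i j|) N)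
    (At : Matrix (Fin n) (Fin n) ℝ) (hAt : At = N⁻¹ • A)
    (e : Fin n → ℝ) (he : e = fun _ => 1)
    (α : ℝ) (hα : α ∈ Set.Ioo (0 : ℝ) 1)
    (vs : ℕ → Fin n → ℝ)
    (hvs : ∀ k, vs k = ∑ ℓ ∈ Finset.range (k + 1), ((-1 : ℝ) ^ ℓ * α ^ ℓ) • ((At ^ ℓ) *ᵥ e))
    (v : Fin n → ℝ) (hv : Tendsto vs atTop (𝓝 v))
    (xi xj : Fin n) (hij : ∀ y, R y xi ↔ R y xj) :
    v xi = v xj := by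
  have hrow : ∀ k, At xi k = At xj k := by
    intro k
    simp [hAt, hA, hij k]
  have hterm : ∀ ℓ, ((At ^ ℓ) *ᵥ e) xi = ((At ^ ℓ) *ᵥ e) xj := by
    intro ℓ
    cases ℓ with
    | zero => simp [he]
    | succ m =>
        rw [pow_succ', ← Matrix.mulVec_mulVec]
        simp only [Matrix.mulVec, dotProduct]
        exact Finset.sum_congr rfl fun k _ => by rw [hrow k]
  have hvseq : ∀ k, vs k xi = vs k xj := by
    intro k
    rw [hvs k]
    simp only [Finset.sum_apply, Pi.smul_apply]
    exact Finset.sum_congr rfl fun ℓ _ => by rw [hterm ℓ]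
  have hi : Tendsto (fun k => vs k xi) atTop (𝓝 (v xi)) :=
    (tendsto_pi_nhds.mp hv) xi
  have hj : Tendsto (fun k => vs k xj) atTop (𝓝 (v xj)) :=
    (tendsto_pi_nhds.mp hv) xj
  have : Tendsto (fun k => vs k xi) atTop (𝓝 (v xj)) := by
    simpa [funext hvseq] using hj
  exact tendsto_nhds_unique hi this
end

section
/- (Strict set-comparison monotonicity) For any damping factor α ∈ (0,1) and arguments x_i, x_j ∈ X: if there exists an injective map λ : R^-(x_i) → R^-(x_j) such that v_α(λ(x)) ≥ v_α(x) for every x ∈ R^-(x_i), and additionally either |R^-(x_i)| < |R^-(x_j)| or v_α(λ(x)) > v_α(x) for some x ∈ R^-(x_i), then v_α(x_i) > v_α(x_j). -/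
open Matrix Filter Topology

/-- Strict set-comparison monotonicity: under the hypotheses of
STATEMENT 16, if moreover |R⁻(x_i)| < |R⁻(x_j)| or v(λ(x)) > v(x) for some attacker x
of x_i, then v(x_i) > v(x_j). -/
theorem counting_semantics_set_strict_monotone
    (n : ℕ) (R : Fin n → Fin n → Prop) [DecidableRel R]
    (hR : ∃ i j, R i j)
    (A : Matrix (Fin n) (Fin n) ℝ)
    (hA : ∀ i j, A i j = if R j i then 1 else 0)
    (N : ℝ) (hN : IsGreatest (Set.range fun i : Fin n => ∑ j, |A i j|) N)
    (At : Matrix (Fin n) (Fin n) ℝ) (hAt : At = N⁻¹ • A)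
    (e : Fin n → ℝ) (he : e = fun _ => 1)
    (α : ℝ) (hα : α ∈ Set.Ioo (0 : ℝ) 1)
    (vs : ℕ → Fin n → ℝ)
    (hvs : ∀ k, vs k = ∑ ℓ ∈ Finset.range (k + 1), ((-1 : ℝ) ^ ℓ * α ^ ℓ) • ((At ^ ℓ) *ᵥ e))
    (v : Fin n → ℝ) (hv : Tendsto vs atTop (𝓝 v))
    (xi xj : Fin n)
    (lam : {y : Fin n // R y xi} → {y : Fin n // R y xj})
    (hinj : Function.Injective lam)
    (hmono : ∀ y, v y.1 ≤ v (lam y).1)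
    (hstrict : Fintype.card {y : Fin n // R y xi} < Fintype.card {y : Fin n // R y xj} ∨
      ∃ y, v y.1 < v (lam y).1) :
    v xj < v xi := by
  obtain ⟨hα0, hα1⟩ := hα
  obtain ⟨i0, j0, hij⟩ := hR
  have hub : ∀ i : Fin n, ∑ j, |A i j| ≤ N := fun i => hN.2 ⟨i, rfl⟩
  have hN1 : (1 : ℝ) ≤ N := by
    have h1 : (1 : ℝ) ≤ ∑ k, |A j0 k| := by
      have h0 : |A j0 i0| = 1 := by rw [hA]; simp [hij]
      calc (1 : ℝ) = |A j0 i0| := h0.symm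
        _ ≤ ∑ k, |A j0 k| :=
          Finset.single_le_sum (f := fun k => |A j0 k|)
            (fun k _ => abs_nonneg _) (Finset.mem_univ i0)
    linarith [hub j0]
  have hN0 : (0 : ℝ) < N := by linarith
  have hAnn : ∀ i j, 0 ≤ A i j := by
    intro i j; rw [hA]; split <;> norm_num
  have hAtnn : ∀ i j, 0 ≤ At i j := by
    intro i j
    rw [hAt]
    simp only [Matrix.smul_apply, smul_eq_mul]
    exact mul_nonneg (inv_nonneg.2 hN0.le) (hAnn i j)
  have hrow : ∀ i, ∑ j, At i j ≤ 1 := by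
    intro i
    have h1 : ∑ j, At i j = N⁻¹ * ∑ j, A i j := by
      rw [Finset.mul_sum]
      exact Finset.sum_congr rfl fun j _ => by
        rw [hAt]; simp [Matrix.smul_apply, smul_eq_mul]
    have h2 : ∑ j, A i j ≤ N := by
      calc ∑ j, A i j = ∑ j, |A i j| :=
            Finset.sum_congr rfl fun j _ => (abs_of_nonneg (hAnn i j)).symm
        _ ≤ N := hub i
    rw [h1]
    calc N⁻¹ * ∑ j, A i j ≤ N⁻¹ * N :=
          mul_le_mul_of_nonneg_left h2 (inv_nonneg.2 hN0.le)
      _ = 1 := inv_mul_cancel₀ hN0.ne'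
  have hmv : ∀ u : Fin n → ℝ, (∀ j, 0 ≤ u j) → (∀ j, u j ≤ 1) →
      ∀ i, 0 ≤ (At *ᵥ u) i ∧ (At *ᵥ u) i ≤ 1 := by
    intro u h0 h1 i
    have happ : (At *ᵥ u) i = ∑ j, At i j * u j := rfl
    constructor
    · rw [happ]
      exact Finset.sum_nonneg fun j _ => mul_nonneg (hAtnn i j) (h0 j)
    · rw [happ]
      calc ∑ j, At i j * u j ≤ ∑ j, At i j * 1 :=
            Finset.sum_le_sum fun j _ =>
              mul_le_mul_of_nonneg_left (h1 j) (hAtnn i j)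
        _ = ∑ j, At i j := by simp
        _ ≤ 1 := hrow i
  -- recurrence
  have hrec : ∀ k, vs (k + 1) = e - α • (At *ᵥ vs k) := by
    intro k
    rw [hvs (k + 1), Finset.sum_range_succ']
    have h0 : ((-1 : ℝ) ^ 0 * α ^ 0) • ((At ^ 0) *ᵥ e) = e := by
      simp [Matrix.one_mulVec]
    rw [h0]
    have h2 : ∑ ℓ ∈ Finset.range (k + 1),
        ((-1 : ℝ) ^ (ℓ + 1) * α ^ (ℓ + 1)) • ((At ^ (ℓ + 1)) *ᵥ e)
        = -(α • (At *ᵥ vs k)) := by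
      have hterm : ∀ ℓ ∈ Finset.range (k + 1),
          ((-1 : ℝ) ^ (ℓ + 1) * α ^ (ℓ + 1)) • ((At ^ (ℓ + 1)) *ᵥ e)
          = -(α • (At.mulVecLin (((-1 : ℝ) ^ ℓ * α ^ ℓ) • ((At ^ ℓ) *ᵥ e)))) := by
        intro ℓ _
        rw [LinearMap.map_smul, Matrix.mulVecLin_apply, Matrix.mulVec_mulVec, ← pow_succ',
          smul_smul, ← neg_smul]
        congr 1
        ring
      rw [Finset.sum_congr rfl hterm, Finset.sum_neg_distrib, ← Finset.smul_sum,
        ← map_sum, ← hvs k, Matrix.mulVecLin_apply]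
    rw [h2]
    abel
  -- bounds on partial sums
  have hb : ∀ k, (∀ i, 0 ≤ vs k i) ∧ (∀ i, vs k i ≤ 1) := by
    intro k
    induction k with
    | zero =>
      have h0 : vs 0 = e := by
        rw [hvs 0]; simp [Matrix.one_mulVec]
      rw [h0, he]
      exact ⟨fun i => by norm_num, fun i => le_refl 1⟩
    | succ k ih =>
      constructor <;> intro i <;>
      · have hlo := (hmv (vs k) ih.1 ih.2 i).1
        have hhi := (hmv (vs k) ih.1 ih.2 i).2
        rw [hrec k]
        simp only [Pi.sub_apply, Pi.smul_apply, smul_eq_mul, he]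
        nlinarith
  have hb2 : ∀ k i, 1 - α ≤ vs (k + 1) i := by
    intro k i
    have hhi := (hmv (vs k) (hb k).1 (hb k).2 i).2
    rw [hrec k]
    simp only [Pi.sub_apply, Pi.smul_apply, smul_eq_mul, he]
    nlinarith
  have hvt : ∀ i, Tendsto (fun k => vs k i) atTop (𝓝 (v i)) :=
    fun i => tendsto_pi_nhds.1 hv i
  have hvpos : ∀ i, 0 < v i := by
    intro i
    have h1 : 1 - α ≤ v i := by
      apply ge_of_tendsto (hvt i)
      filter_upwards [Filter.eventually_ge_atTop 1] with k hk
      cases k with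
      | zero => omega
      | succ m => exact hb2 m i
    linarith
  -- fixed point equation
  have hfix : ∀ i, v i = 1 - α * ∑ j, At i j * v j := by
    intro i
    have hL : Tendsto (fun k => vs (k + 1) i) atTop (𝓝 (v i)) :=
      (hvt i).comp (tendsto_add_atTop_nat 1)
    have hR' : Tendsto (fun k => vs (k + 1) i) atTop
        (𝓝 (1 - α * ∑ j, At i j * v j)) := by
      have hcong : ∀ k, vs (k + 1) i = 1 - α * ∑ j, At i j * vs k j := by
        intro k
        rw [hrec k]
        simp [he, Matrix.mulVec, dotProduct]
      simp only [hcong]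
      exact Tendsto.const_sub _ (Tendsto.const_mul _
        (tendsto_finset_sum _ fun j _ => (hvt j).const_mul _))
    exact tendsto_nhds_unique hL hR'
  -- rewrite the attack sum as a subtype sum
  have hsum : ∀ i : Fin n,
      (∑ j, At i j * v j) = N⁻¹ * ∑ y : {y : Fin n // R y i}, v y.1 := by
    intro i
    have h1 : ∀ j, At i j * v j = if R j i then N⁻¹ * v j else 0 := by
      intro j
      rw [hAt]
      simp only [Matrix.smul_apply, smul_eq_mul, hA]
      split_ifs <;> ring
    calc ∑ j, At i j * v j = ∑ j, if R j i then N⁻¹ * v j else 0 :=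
          Finset.sum_congr rfl fun j _ => h1 j
      _ = ∑ j ∈ Finset.univ.filter (fun j => R j i), N⁻¹ * v j :=
          (Finset.sum_filter _ _).symm
      _ = ∑ y : {y : Fin n // R y i}, N⁻¹ * v y.1 :=
          Finset.sum_subtype _ (by simp) _
      _ = N⁻¹ * ∑ y : {y : Fin n // R y i}, v y.1 := by rw [Finset.mul_sum]
  set Si := ∑ y : {y : Fin n // R y xi}, v y.1 with hSi
  set Sj := ∑ y : {y : Fin n // R y xj}, v y.1 with hSj
  have key : Si < Sj := by
    classical
    have himg : ∑ y : {y : Fin n // R y xi}, v (lam y).1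
        = ∑ z ∈ Finset.univ.image lam, v z.1 :=
      (Finset.sum_image (g := lam) (f := fun z : {y : Fin n // R y xj} => v z.1)
        (fun x _ y _ h => hinj h)).symm
    have hsub : Finset.univ.image lam ⊆ (Finset.univ : Finset {y : Fin n // R y xj}) :=
      Finset.subset_univ _
    rcases hstrict with hcard | ⟨y0, hy0⟩
    · have hle : Si ≤ ∑ y : {y : Fin n // R y xi}, v (lam y).1 :=
        Finset.sum_le_sum fun y _ => hmono y
      have hcard2 : (Finset.univ.image lam).card <
          (Finset.univ : Finset {y : Fin n // R y xj}).card := by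
        rw [Finset.card_image_of_injective _ hinj]
        simpa [Finset.card_univ] using hcard
      obtain ⟨z, hz, hznot⟩ : ∃ z ∈ (Finset.univ : Finset {y : Fin n // R y xj}),
          z ∉ Finset.univ.image lam := by
        by_contra h
        push_neg at h
        have hss : (Finset.univ : Finset {y : Fin n // R y xj}) ⊆ Finset.univ.image lam :=
          fun z hz => h z hz
        have := Finset.card_le_card hss
        omega
      have hlt : ∑ z ∈ Finset.univ.image lam, v z.1 < Sj :=
        Finset.sum_lt_sum_of_subset hsub hz hznot (hvpos z.1)
          (fun j _ _ => (hvpos j.1).le)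
      calc Si ≤ _ := hle
        _ = _ := himg
        _ < Sj := hlt
    · have hlt : Si < ∑ y : {y : Fin n // R y xi}, v (lam y).1 :=
        Finset.sum_lt_sum (fun y _ => hmono y) ⟨y0, Finset.mem_univ _, hy0⟩
      have hle2 : ∑ z ∈ Finset.univ.image lam, v z.1 ≤ Sj :=
        Finset.sum_le_sum_of_subset_of_nonneg hsub (fun j _ _ => (hvpos j.1).le)
      calc Si < _ := hlt
        _ = _ := himg
        _ ≤ Sj := hle2
  have hxi := hfix xi
  have hxj := hfix xj
  rw [hsum xi] at hxi
  rw [hsum xj] at hxj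
  have hpos : 0 < α * N⁻¹ := mul_pos hα0 (inv_pos.2 hN0)
  nlinarith [mul_lt_mul_of_pos_left key hpos]
end
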